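/- Let s be a Hadamard matrix of order 4k (k > 1) with s_{i,1} = 1 for all i. For all pairwise distinct column indices i, j, m, all different from 1: N_{ij}^m = k − (1/2)·|ξ_i Δ ξ_j Δ ξ_m| = k − 2·|ξ_i ∩ ξ_j ∩ ξ_m|, where N_{ij}^m := (1/4) Σ_{l=1}^{4k} s_{li} s_{lj} s_{lm}, ξ_i := {l : s_{li} = −1}, and Δ denotes the symmetric difference of sets. -/
import Mathlib


open scoped BigOperators symmDiff

/-- The set `ξ_i` of row indices where column `i` of `s` has entry `-1`. -/
def hadamardNegSet {n : ℕ} (s : Matrix (Fin n) (Fin n) ℤ) (i : Fin n) :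
    Finset (Fin n) :=
  Finset.univ.filter (fun l => s l i = -1)

/-- indicator of `hadamardNegSet`. -/
def hadChi {n : ℕ} (s : Matrix (Fin n) (Fin n) ℤ) (c l : Fin n) : ℤ :=
  if s l c = -1 then 1 else 0

lemma hadChi_spec {n : ℕ} (s : Matrix (Fin n) (Fin n) ℤ)
    (hpm : ∀ i j, s i j = 1 ∨ s i j = -1) (c l : Fin n) :
    s l c = 1 - 2 * hadChi s c l := by
  rcases hpm l c with h | h <;> simp [hadChi, h]

lemma hadCard_eq {n : ℕ} (s : Matrix (Fin n) (Fin n) ℤ) (c : Fin n) :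
    ((hadamardNegSet s c).card : ℤ) = ∑ l, hadChi s c l := by
  rw [hadamardNegSet, Finset.card_filter]
  push_cast
  rfl

lemma hadCard_inter_eq {n : ℕ} (s : Matrix (Fin n) (Fin n) ℤ) (a b : Fin n) :
    ((hadamardNegSet s a ∩ hadamardNegSet s b).card : ℤ)
      = ∑ l, hadChi s a l * hadChi s b l := by
  rw [show hadamardNegSet s a ∩ hadamardNegSet s b
      = Finset.univ.filter (fun l => s l a = -1 ∧ s l b = -1) by
    ext l; simp [hadamardNegSet, and_assoc]]
  rw [Finset.card_filter]
  push_cast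
  apply Finset.sum_congr rfl
  intro l _
  by_cases h1 : s l a = -1 <;> by_cases h2 : s l b = -1 <;>
    simp [hadChi, h1, h2]

lemma hadCard_inter3_eq {n : ℕ} (s : Matrix (Fin n) (Fin n) ℤ) (a b c : Fin n) :
    ((hadamardNegSet s a ∩ hadamardNegSet s b ∩ hadamardNegSet s c).card : ℤ)
      = ∑ l, hadChi s a l * hadChi s b l * hadChi s c l := by
  rw [show hadamardNegSet s a ∩ hadamardNegSet s b ∩ hadamardNegSet s c
      = Finset.univ.filter (fun l => s l a = -1 ∧ s l b = -1 ∧ s l c = -1) by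
    ext l; simp [hadamardNegSet, and_assoc]]
  rw [Finset.card_filter]
  push_cast
  apply Finset.sum_congr rfl
  intro l _
  by_cases h1 : s l a = -1 <;> by_cases h2 : s l b = -1 <;>
    by_cases h3 : s l c = -1 <;> simp [hadChi, h1, h2, h3]

lemma hadCard_symmdiff_eq {n : ℕ} (s : Matrix (Fin n) (Fin n) ℤ) (a b c : Fin n) :
    ((((hadamardNegSet s a) ∆ (hadamardNegSet s b)) ∆ (hadamardNegSet s c)).card : ℤ)
      = ∑ l, (hadChi s a l + hadChi s b l + hadChi s c l
          - 2 * (hadChi s a l * hadChi s b l + hadChi s a l * hadChi s c l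
              + hadChi s b l * hadChi s c l)
          + 4 * (hadChi s a l * hadChi s b l * hadChi s c l)) := by
  set X := (((hadamardNegSet s a) ∆ (hadamardNegSet s b)) ∆ (hadamardNegSet s c)) with hX
  have h0 : (X.card : ℤ) = ∑ l, (if l ∈ X then (1:ℤ) else 0) := by
    rw [Finset.sum_ite_mem, Finset.univ_inter, Finset.sum_const]
    simp
  rw [h0]
  apply Finset.sum_congr rfl
  intro l _
  by_cases h1 : s l a = -1 <;> by_cases h2 : s l b = -1 <;> by_cases h3 : s l c = -1 <;>
    simp [hX, Finset.mem_symmDiff, hadamardNegSet, hadChi, h1, h2, h3]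

/-- Let `s` be a Hadamard matrix of order `4k` (`k > 1`)
with first column all ones.  For pairwise distinct column indices `i, j, m`,
all different from the first one, the structure constant
`N_{ij}^m = (1/4) ∑ l, s l i * s l j * s l m` satisfies
`N_{ij}^m = k − (1/2)|ξ_i Δ ξ_j Δ ξ_m| = k − 2|ξ_i ∩ ξ_j ∩ ξ_m|`
(the first equality stated multiplied by `2`). -/
theorem hadamard_structure_constants_via_negSets
    (k : ℕ) (hk : 1 < k)
    (s : Matrix (Fin (4 * k)) (Fin (4 * k)) ℤ)
    (hpm : ∀ i j, s i j = 1 ∨ s i j = -1)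
    (hH : s * s.transpose = (4 * (k : ℤ)) • 1)
    (h1 : ∀ i, s i ⟨0, by omega⟩ = 1)
    (i j m : Fin (4 * k))
    (hij : i ≠ j) (him : i ≠ m) (hjm : j ≠ m)
    (hi : i ≠ ⟨0, by omega⟩) (hj : j ≠ ⟨0, by omega⟩) (hm : m ≠ ⟨0, by omega⟩) :
    (∑ l, s l i * s l j * s l m) / 4 =
      (k : ℤ) - 2 * ((hadamardNegSet s i ∩ hadamardNegSet s j ∩
        hadamardNegSet s m).card : ℤ) ∧
    2 * ((∑ l, s l i * s l j * s l m) / 4) =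
      2 * (k : ℤ) - (((hadamardNegSet s i ∆ hadamardNegSet s j) ∆
        hadamardNegSet s m).card : ℤ) := by
  have hk0 : (0:ℕ) < 4 * k := by omega
  set z : Fin (4*k) := ⟨0, by omega⟩ with hz
  -- orthogonality of columns
  have horth : ∀ a b : Fin (4*k), a ≠ b → ∑ l, s l a * s l b = 0 := by
    intro a b hab
    have hq : (s.map (Int.castRingHom ℚ)) * (s.map (Int.castRingHom ℚ)).transpose
        = (4 * (k:ℚ)) • 1 := by
      have := congrArg (fun M => M.map (Int.castRingHom ℚ)) hH
      simp only [Matrix.map_mul, Matrix.transpose_map] at this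
      rw [this]
      ext x y
      simp only [Matrix.map_apply, Matrix.smul_apply, Matrix.one_apply, smul_eq_mul]
      split_ifs <;> simp
    set sq := s.map (Int.castRingHom ℚ) with hsq
    have hknz : (4 * (k:ℚ)) ≠ 0 := by positivity
    have h1' : sq * ((4 * (k:ℚ))⁻¹ • sq.transpose) = 1 := by
      rw [Matrix.mul_smul, hq, smul_smul, inv_mul_cancel₀ hknz, one_smul]
    have h2' : ((4 * (k:ℚ))⁻¹ • sq.transpose) * sq = 1 :=
      mul_eq_one_comm.mp h1'
    have h3' : sq.transpose * sq = (4 * (k:ℚ)) • 1 := by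
      have h5 : (4 * (k:ℚ))⁻¹ • (sq.transpose * sq) = 1 := by
        rw [← Matrix.smul_mul]; exact h2'
      calc sq.transpose * sq
          = (4 * (k:ℚ)) • ((4 * (k:ℚ))⁻¹ • (sq.transpose * sq)) := by
            rw [smul_smul, mul_inv_cancel₀ hknz, one_smul]
        _ = (4 * (k:ℚ)) • 1 := by rw [h5]
    have h4' := congrFun (congrFun h3' a) b
    simp [Matrix.mul_apply, Matrix.transpose_apply, Matrix.smul_apply,
      Matrix.one_apply, hab, hsq] at h4'
    exact_mod_cast h4'
  have hchi := hadChi_spec s hpm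
  -- single sums
  have hsum1 : ∀ c : Fin (4*k), c ≠ z → ∑ l, hadChi s c l = 2 * k := by
    intro c hc
    have h := horth z c (Ne.symm hc)
    have e : ∀ l, s l z * s l c = 1 - 2 * hadChi s c l := by
      intro l; rw [h1 l, one_mul]; exact hchi c l
    rw [Finset.sum_congr rfl (fun l _ => e l), Finset.sum_sub_distrib,
      Finset.sum_const, ← Finset.mul_sum] at h
    simp [Finset.card_univ] at h
    push_cast at h ⊢
    linarith
  -- pairwise sums
  have hsum2 : ∀ a b : Fin (4*k), a ≠ b → a ≠ z → b ≠ z →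
      ∑ l, hadChi s a l * hadChi s b l = k := by
    intro a b hab ha hb
    have h := horth a b hab
    have e : ∀ l, s l a * s l b = 1 - 2 * hadChi s a l - 2 * hadChi s b l
        + 4 * (hadChi s a l * hadChi s b l) := by
      intro l; rw [hchi a l, hchi b l]; ring
    rw [Finset.sum_congr rfl (fun l _ => e l), Finset.sum_add_distrib,
      Finset.sum_sub_distrib, Finset.sum_sub_distrib, Finset.sum_const,
      ← Finset.mul_sum, ← Finset.mul_sum, ← Finset.mul_sum,
      hsum1 a ha, hsum1 b hb] at h
    simp [Finset.card_univ] at h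
    push_cast at h ⊢
    linarith
  -- triple sum
  set T : ℤ := ∑ l, hadChi s i l * hadChi s j l * hadChi s m l with hT
  have hS : (∑ l, s l i * s l j * s l m) = 4 * k - 8 * T := by
    have e : ∀ l, s l i * s l j * s l m =
        1 - 2 * hadChi s i l - 2 * hadChi s j l - 2 * hadChi s m l
        + 4 * (hadChi s i l * hadChi s j l)
        + 4 * (hadChi s i l * hadChi s m l)
        + 4 * (hadChi s j l * hadChi s m l)
        - 8 * (hadChi s i l * hadChi s j l * hadChi s m l) := by
      intro l; rw [hchi i l, hchi j l, hchi m l]; ring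
    rw [Finset.sum_congr rfl (fun l _ => e l)]
    rw [Finset.sum_sub_distrib, Finset.sum_add_distrib, Finset.sum_add_distrib,
      Finset.sum_add_distrib, Finset.sum_sub_distrib, Finset.sum_sub_distrib,
      Finset.sum_sub_distrib, Finset.sum_const,
      ← Finset.mul_sum, ← Finset.mul_sum, ← Finset.mul_sum, ← Finset.mul_sum,
      ← Finset.mul_sum, ← Finset.mul_sum, ← Finset.mul_sum,
      hsum1 i hi, hsum1 j hj, hsum1 m hm, hsum2 i j hij hi hj,
      hsum2 i m him hi hm, hsum2 j m hjm hj hm]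
    simp [Finset.card_univ]
    push_cast
    ring
  have hI3 : ((hadamardNegSet s i ∩ hadamardNegSet s j ∩
      hadamardNegSet s m).card : ℤ) = T := hadCard_inter3_eq s i j m
  have hSD : (((hadamardNegSet s i ∆ hadamardNegSet s j) ∆
      hadamardNegSet s m).card : ℤ) = 4 * T := by
    rw [hadCard_symmdiff_eq s i j m]
    rw [Finset.sum_add_distrib, Finset.sum_sub_distrib, Finset.sum_add_distrib,
      Finset.sum_add_distrib, ← Finset.mul_sum, ← Finset.mul_sum,
      Finset.sum_add_distrib, Finset.sum_add_distrib,
      hsum1 i hi, hsum1 j hj, hsum1 m hm, hsum2 i j hij hi hj,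
      hsum2 i m him hi hm, hsum2 j m hjm hj hm, ← hT]
    push_cast
    ring
  have hdiv : (∑ l, s l i * s l j * s l m) / 4 = (k:ℤ) - 2 * T := by
    rw [hS, show (4 * (k:ℤ) - 8 * T) = 4 * ((k:ℤ) - 2 * T) by ring,
      Int.mul_ediv_cancel_left _ (by norm_num)]
  constructor
  · rw [hdiv, hI3]
  · rw [hdiv, hSD]
    ring
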